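/- arXiv:cs/0308021 — 6 statements merged into one kernel-verified Lean document; each statement's English description precedes it below -/
import Mathlib

section
/- Let p ≥ 1 be an integer and let f_{i,j} ∈ ℝ² for 0 ≤ i ≤ p, 0 ≤ j ≤ p. Define F : ℝ² → ℝ² by F(ξ,η) = Σ_{i=0}^{p} Σ_{j=0}^{p} f_{i,j} (1−ξ)^{p−i} ξ^i (1−η)^{p−j} η^j · (p!/(i!(p−i)!)) · (p!/(j!(p−j)!)). Let G_ξ = {p(f_{i+1,j} − f_{i,j}) : 0 ≤ i ≤ p−1, 0 ≤ j ≤ p} and G_η = {p(f_{i,j+1} − f_{i,j}) : 0 ≤ i ≤ p, 0 ≤ j ≤ p−1}. Suppose that for every u in the convex hull of G_ξ and every v in the convex hull of G_η, the 2×2 matrix with columns u and v is invertible. Then for every (ξ,η) ∈ [0,1] × [0,1], the Jacobian matrix of F at (ξ,η) is invertible. -/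
/-!
The Jacobian columns of a tensor-product Bézier patch are again tensor-product Bézier patches,
of one degree less in the differentiated variable, whose control points are exactly the scaled
differences making up `Gξ` and `Gη`; this is the hodograph formula
`B'_{n,ν} = n (B_{n-1,ν-1} - B_{n-1,ν})` followed by an Abel summation. Since Bernstein
polynomials are nonnegative on `[0,1]` and sum to one, at every point of the square the two
columns are convex combinations of elements of `Gξ` and of `Gη` respectively, and the hull
condition applies.
-/

open Finset
open scoped Nat

section Bezier

variable {E : Type*} [NormedAddCommGroup E] [NormedSpace ℝ E]

lemma bernsteinPolynomial_eval_nonneg {n ν : ℕ} {t : ℝ} (ht : t ∈ Set.Icc (0 : ℝ) 1) :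
    0 ≤ (bernsteinPolynomial ℝ n ν).eval t := by
  simp only [bernsteinPolynomial, Polynomial.eval_mul, Polynomial.eval_pow, Polynomial.eval_sub,
    Polynomial.eval_one, Polynomial.eval_X, Polynomial.eval_natCast]
  exact mul_nonneg (mul_nonneg (Nat.cast_nonneg _) (pow_nonneg ht.1 _)) (pow_nonneg (sub_nonneg.2 ht.2) _)

lemma sum_bernsteinPolynomial_eval (n : ℕ) (t : ℝ) :
    ∑ ν ∈ range (n + 1), (bernsteinPolynomial ℝ n ν).eval t = 1 := by
  rw [← Polynomial.eval_finsetSum, bernsteinPolynomial.sum, Polynomial.eval_one]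

noncomputable def bezierCurve (n : ℕ) (a : ℕ → E) (t : ℝ) : E :=
  ∑ ν ∈ range (n + 1), (bernsteinPolynomial ℝ n ν).eval t • a ν

lemma bezierCurve_sub (n : ℕ) (a b : ℕ → E) (t : ℝ) :
    bezierCurve n (fun ν => a ν - b ν) t = bezierCurve n a t - bezierCurve n b t := by
  simp only [bezierCurve, smul_sub, sum_sub_distrib]

lemma bezierCurve_smul (n : ℕ) (c : ℝ) (a : ℕ → E) (t : ℝ) :
    bezierCurve n (fun ν => c • a ν) t = c • bezierCurve n a t := by
  simp only [bezierCurve, smul_sum, smul_comm c]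

lemma Convex.bezierCurve_mem {s : Set E} (hs : Convex ℝ s) {n : ℕ} {a : ℕ → E} {t : ℝ}
    (ht : t ∈ Set.Icc (0 : ℝ) 1) (ha : ∀ ν ≤ n, a ν ∈ s) : bezierCurve n a t ∈ s :=
  hs.sum_mem (fun _ _ => bernsteinPolynomial_eval_nonneg ht) (sum_bernsteinPolynomial_eval n t)
    fun ν hν => ha ν (Nat.lt_succ_iff.1 (mem_range.1 hν))

lemma hasDerivAt_bezierCurve (n : ℕ) (a : ℕ → E) (t : ℝ) :
    HasDerivAt (bezierCurve n a)
      (bezierCurve (n - 1) (fun ν => (n : ℝ) • (a (ν + 1) - a ν)) t) t := by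
  have hder := HasDerivAt.fun_sum (u := range (n + 1)) fun ν _ =>
    (Polynomial.hasDerivAt (bernsteinPolynomial ℝ n ν) t).smul_const (a ν)
  refine hder.congr_deriv ?_
  rcases n with _ | n
  · simp [bezierCurve, bernsteinPolynomial]
  have hshift : ∑ ν ∈ range (n + 1), (bernsteinPolynomial ℝ n (ν + 1)).eval t • a (ν + 1)
      + (bernsteinPolynomial ℝ n 0).eval t • a 0 = bezierCurve n a t := by
    rw [← sum_range_succ' (fun ν => (bernsteinPolynomial ℝ n ν).eval t • a ν), sum_range_succ,
      bernsteinPolynomial.eq_zero_of_lt ℝ n.lt_succ_self, Polynomial.eval_zero, zero_smul,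
      add_zero, bezierCurve]
  rw [sum_range_succ', Nat.add_sub_cancel, bernsteinPolynomial.derivative_zero]
  simp only [bernsteinPolynomial.derivative_succ, Polynomial.eval_mul, Polynomial.eval_sub,
    Polynomial.eval_neg, Polynomial.eval_natCast, Nat.add_sub_cancel, mul_smul, sub_smul, neg_smul,
    ← smul_sum, sum_sub_distrib]
  rw [bezierCurve_smul, bezierCurve_sub, ← hshift]
  simp only [bezierCurve, smul_sub, smul_add]
  abel

noncomputable def bezierSurface (m n : ℕ) (f : ℕ → ℕ → E) (x : ℝ × ℝ) : E :=
  bezierCurve m (fun i => bezierCurve n (f i) x.2) x.1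

lemma bezierSurface_eq_sum (n : ℕ) (f : ℕ → ℕ → E) (x : ℝ × ℝ) :
    bezierSurface n n f x = ∑ i ∈ range (n + 1), ∑ j ∈ range (n + 1),
      ((1 - x.1) ^ (n - i) * x.1 ^ i * (1 - x.2) ^ (n - j) * x.2 ^ j *
        ((n ! : ℝ) / ((i ! : ℝ) * ((n - i)! : ℝ))) *
        ((n ! : ℝ) / ((j ! : ℝ) * ((n - j)! : ℝ)))) • f i j := by
  simp only [bezierSurface, bezierCurve, smul_sum, smul_smul]
  refine sum_congr rfl fun i hi => sum_congr rfl fun j hj => ?_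
  rw [← Nat.cast_choose ℝ (Nat.lt_succ_iff.1 (mem_range.1 hi)),
    ← Nat.cast_choose ℝ (Nat.lt_succ_iff.1 (mem_range.1 hj))]
  simp only [bernsteinPolynomial, Polynomial.eval_mul, Polynomial.eval_pow, Polynomial.eval_sub,
    Polynomial.eval_one, Polynomial.eval_X, Polynomial.eval_natCast]
  ring_nf

lemma differentiable_bezierSurface (m n : ℕ) (f : ℕ → ℕ → E) :
    Differentiable ℝ (bezierSurface m n f) := by
  unfold bezierSurface bezierCurve
  fun_prop

lemma Convex.bezierSurface_mem {s : Set E} (hs : Convex ℝ s) {m n : ℕ} {f : ℕ → ℕ → E}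
    {x : ℝ × ℝ} (hx₁ : x.1 ∈ Set.Icc (0 : ℝ) 1) (hx₂ : x.2 ∈ Set.Icc (0 : ℝ) 1)
    (hf : ∀ i ≤ m, ∀ j ≤ n, f i j ∈ s) : bezierSurface m n f x ∈ s :=
  hs.bezierCurve_mem hx₁ fun i hi => hs.bezierCurve_mem hx₂ (hf i hi)

lemma hasDerivAt_bezierSurface_fst (m n : ℕ) (f : ℕ → ℕ → E) (x : ℝ × ℝ) :
    HasDerivAt (fun t => bezierSurface m n f (t, x.2))
      (bezierSurface (m - 1) n (fun i j => (m : ℝ) • (f (i + 1) j - f i j)) x) x.1 := by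
  have h := hasDerivAt_bezierCurve m (fun i => bezierCurve n (f i) x.2) x.1
  simp only [← bezierCurve_sub, ← bezierCurve_smul] at h
  exact h

lemma hasDerivAt_bezierSurface_snd (m n : ℕ) (f : ℕ → ℕ → E) (x : ℝ × ℝ) :
    HasDerivAt (fun t => bezierSurface m n f (x.1, t))
      (bezierSurface m (n - 1) (fun i j => (n : ℝ) • (f i (j + 1) - f i j)) x) x.2 := by
  show HasDerivAt
    (fun t => ∑ i ∈ range (m + 1), (bernsteinPolynomial ℝ m i).eval x.1 • bezierCurve n (f i) t) _ _
  exact HasDerivAt.fun_sum fun i _ => (hasDerivAt_bezierCurve n (f i) x.2).const_smul _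

end Bezier

section PartialDerivatives

variable {E : Type*} [NormedAddCommGroup E] [NormedSpace ℝ E] {F : ℝ × ℝ → E} {x : ℝ × ℝ} {u : E}

lemma fderiv_apply_one_zero_eq (hF : DifferentiableAt ℝ F x)
    (hu : HasDerivAt (fun t => F (t, x.2)) u x.1) : fderiv ℝ F x (1, 0) = u :=
  (hF.hasFDerivAt.comp_hasDerivAt_of_eq x.1 ((hasDerivAt_id x.1).prodMk (hasDerivAt_const _ _))
    rfl).unique hu

lemma fderiv_apply_zero_one_eq (hF : DifferentiableAt ℝ F x)
    (hu : HasDerivAt (fun t => F (x.1, t)) u x.2) : fderiv ℝ F x (0, 1) = u :=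
  (hF.hasFDerivAt.comp_hasDerivAt_of_eq x.2 ((hasDerivAt_const _ _).prodMk (hasDerivAt_id x.2))
    rfl).unique hu

end PartialDerivatives

theorem jacobian_invertible_of_hull_condition_square_general
    (p : ℕ) (f : ℕ → ℕ → EuclideanSpace ℝ (Fin 2))
    (F : ℝ × ℝ → EuclideanSpace ℝ (Fin 2))
    (hF : F = fun x => ∑ i ∈ Finset.range (p + 1), ∑ j ∈ Finset.range (p + 1),
      ((1 - x.1) ^ (p - i) * x.1 ^ i * (1 - x.2) ^ (p - j) * x.2 ^ j *
        ((Nat.factorial p : ℝ) / ((Nat.factorial i : ℝ) * (Nat.factorial (p - i) : ℝ))) *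
        ((Nat.factorial p : ℝ) / ((Nat.factorial j : ℝ) * (Nat.factorial (p - j) : ℝ)))) • f i j)
    (Gξ Gη : Set (EuclideanSpace ℝ (Fin 2)))
    (hGξ : Gξ = {g | ∃ i ≤ p - 1, ∃ j ≤ p, g = (p : ℝ) • (f (i + 1) j - f i j)})
    (hGη : Gη = {g | ∃ i ≤ p, ∃ j ≤ p - 1, g = (p : ℝ) • (f i (j + 1) - f i j)})
    (hcond : ∀ u ∈ convexHull ℝ Gξ, ∀ v ∈ convexHull ℝ Gη,
      IsUnit !![u 0, v 0; u 1, v 1])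
    (x : ℝ × ℝ) (hx1 : x.1 ∈ Set.Icc (0 : ℝ) 1) (hx2 : x.2 ∈ Set.Icc (0 : ℝ) 1) :
    IsUnit !![fderiv ℝ F x (1, 0) 0, fderiv ℝ F x (0, 1) 0;
              fderiv ℝ F x (1, 0) 1, fderiv ℝ F x (0, 1) 1] := by
  obtain rfl : F = bezierSurface p p f := hF.trans (funext (bezierSurface_eq_sum p f)).symm
  have hdiff := differentiable_bezierSurface p p f x
  rw [fderiv_apply_one_zero_eq hdiff (hasDerivAt_bezierSurface_fst p p f x),
    fderiv_apply_zero_one_eq hdiff (hasDerivAt_bezierSurface_snd p p f x)]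
  refine hcond _ ?_ _ ?_
  · exact (convex_convexHull ℝ Gξ).bezierSurface_mem hx1 hx2 fun i hi j hj =>
      subset_convexHull ℝ Gξ (hGξ ▸ ⟨i, hi, j, hj, rfl⟩)
  · exact (convex_convexHull ℝ Gη).bezierSurface_mem hx1 hx2 fun i hi j hj =>
      subset_convexHull ℝ Gη (hGη ▸ ⟨i, hi, j, hj, rfl⟩)

/-- For a tensor-product Bernstein–Bézier mapping `F : ℝ² → ℝ²` of degree `p`
in each coordinate on the unit square, if every matrix `[u, v]` with `u ∈ hull G_ξ` and
`v ∈ hull G_η` is invertible, then the Jacobian of `F` is invertible everywhere on `[0,1]²`. -/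
theorem jacobian_invertible_of_hull_condition_square
    (p : ℕ) (hp : 1 ≤ p) (f : ℕ → ℕ → EuclideanSpace ℝ (Fin 2))
    (F : ℝ × ℝ → EuclideanSpace ℝ (Fin 2))
    (hF : F = fun x => ∑ i ∈ Finset.range (p + 1), ∑ j ∈ Finset.range (p + 1),
      ((1 - x.1) ^ (p - i) * x.1 ^ i * (1 - x.2) ^ (p - j) * x.2 ^ j *
        ((Nat.factorial p : ℝ) / ((Nat.factorial i : ℝ) * (Nat.factorial (p - i) : ℝ))) *
        ((Nat.factorial p : ℝ) / ((Nat.factorial j : ℝ) * (Nat.factorial (p - j) : ℝ)))) • f i j)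
    (Gξ Gη : Set (EuclideanSpace ℝ (Fin 2)))
    (hGξ : Gξ = {g | ∃ i ≤ p - 1, ∃ j ≤ p, g = (p : ℝ) • (f (i + 1) j - f i j)})
    (hGη : Gη = {g | ∃ i ≤ p, ∃ j ≤ p - 1, g = (p : ℝ) • (f i (j + 1) - f i j)})
    (hcond : ∀ u ∈ convexHull ℝ Gξ, ∀ v ∈ convexHull ℝ Gη,
      IsUnit !![u 0, v 0; u 1, v 1])
    (x : ℝ × ℝ) (hx1 : x.1 ∈ Set.Icc (0 : ℝ) 1) (hx2 : x.2 ∈ Set.Icc (0 : ℝ) 1) :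
    IsUnit !![fderiv ℝ F x (1, 0) 0, fderiv ℝ F x (0, 1) 0;
              fderiv ℝ F x (1, 0) 1, fderiv ℝ F x (0, 1) 1] :=
  jacobian_invertible_of_hull_condition_square_general p f F hF Gξ Gη hGξ hGη hcond x hx1 hx2
end

section
/- Let A and B be nonempty finite sets of vectors in ℝ². Then the following are equivalent: (I) for every u in the convex hull of A and every v in the convex hull of B, the vectors u and v are linearly independent (equivalently, the 2×2 matrix [u, v] is invertible); (II) there exists a vector h ∈ ℝ² such that ⟨h, f⟩ > 0 for all f ∈ A ∪ B, and there exists a vector h̄ ∈ ℝ² such that ⟨h̄, f⟩ > 0 for all f ∈ A and ⟨h̄, f⟩ < 0 for all f ∈ B. -/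
open scoped RealInnerProductSpace Pointwise

/-!
If some `u ∈ conv A` and `v ∈ conv B` were dependent, a convex combination of `u` and `±v` would
vanish, putting `0` in `conv (A ∪ B)` or in `conv (A ∪ -B)`. So under (I) `0` lies in neither
hull, and separating `0` from these compact hulls yields `h` and `h̄`. Conversely, the signs of
`h` and `h̄` at `u` and `v` make `⟪h, u⟫⟪h̄, v⟫ - ⟪h, v⟫⟪h̄, u⟫` negative, so `u, v` are independent.
-/

section Module

variable {E : Type*} [AddCommGroup E] [Module ℝ E]

theorem zero_notMem_convexHull_union_of_linearIndependent {s t : Set E}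
    (hs : s.Nonempty) (ht : t.Nonempty)
    (hind : ∀ u ∈ convexHull ℝ s, ∀ v ∈ convexHull ℝ t, LinearIndependent ℝ ![u, v]) :
    (0 : E) ∉ convexHull ℝ (s ∪ t) := by
  rw [convexHull_union hs ht, mem_convexJoin]
  rintro ⟨u, hu, v, hv, a, b, -, -, hab, hcomb⟩
  obtain ⟨rfl, rfl⟩ := LinearIndependent.pair_iff.mp (hind u hu v hv) a b hcomb
  norm_num at hab

theorem zero_notMem_convexHull_union_neg_of_linearIndependent {s t : Set E}
    (hs : s.Nonempty) (ht : t.Nonempty)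
    (hind : ∀ u ∈ convexHull ℝ s, ∀ v ∈ convexHull ℝ t, LinearIndependent ℝ ![u, v]) :
    (0 : E) ∉ convexHull ℝ (s ∪ -t) := by
  refine zero_notMem_convexHull_union_of_linearIndependent hs ht.neg fun u hu v hv ↦ ?_
  rw [convexHull_neg] at hv
  simpa using hind u hu (-v) hv

end Module

section InnerProductSpace

variable {E : Type*} [NormedAddCommGroup E] [InnerProductSpace ℝ E]

theorem inner_pos_of_mem_convexHull {h u : E} {s : Set E} (hs : ∀ f ∈ s, 0 < ⟪h, f⟫)
    (hu : u ∈ convexHull ℝ s) : 0 < ⟪h, u⟫ :=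
  convexHull_min hs (convex_halfSpace_gt (innerₗ E h).isLinear 0) hu

theorem linearIndependent_pair_of_inner_det_ne_zero {h k u v : E}
    (hdet : ⟪h, u⟫ * ⟪k, v⟫ - ⟪h, v⟫ * ⟪k, u⟫ ≠ 0) : LinearIndependent ℝ ![u, v] := by
  refine LinearIndependent.pair_iff.mpr fun a b hab ↦ ?_
  have eh : a * ⟪h, u⟫ + b * ⟪h, v⟫ = 0 := by
    simpa [inner_add_right, real_inner_smul_right] using congrArg (⟪h, ·⟫) hab
  have ek : a * ⟪k, u⟫ + b * ⟪k, v⟫ = 0 := by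
    simpa [inner_add_right, real_inner_smul_right] using congrArg (⟪k, ·⟫) hab
  have ha : a * (⟪h, u⟫ * ⟪k, v⟫ - ⟪h, v⟫ * ⟪k, u⟫) = 0 := by
    linear_combination ⟪k, v⟫ * eh - ⟪h, v⟫ * ek
  have hb : b * (⟪h, u⟫ * ⟪k, v⟫ - ⟪h, v⟫ * ⟪k, u⟫) = 0 := by
    linear_combination ⟪h, u⟫ * ek - ⟪k, u⟫ * eh
  exact ⟨(mul_eq_zero.mp ha).resolve_right hdet, (mul_eq_zero.mp hb).resolve_right hdet⟩

variable [CompleteSpace E]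

theorem exists_forall_inner_pos_of_zero_notMem_convexHull {s : Set E} (hs : s.Finite)
    (h0 : (0 : E) ∉ convexHull ℝ s) : ∃ h : E, ∀ f ∈ s, 0 < ⟪h, f⟫ := by
  obtain ⟨φ, c, hφ0, hφs⟩ := geometric_hahn_banach_point_closed (convex_convexHull ℝ s)
    (hs.isCompact_convexHull (𝕜 := ℝ)).isClosed h0
  refine ⟨(InnerProductSpace.toDual ℝ E).symm φ, fun f hf ↦ ?_⟩
  rw [map_zero] at hφ0
  rw [InnerProductSpace.toDual_symm_apply]
  exact hφ0.trans (hφs f (subset_convexHull ℝ s hf))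

end InnerProductSpace

/-- For nonempty finite sets `A, B ⊆ ℝ²`, every pair `(u, v)` with
`u ∈ hull A`, `v ∈ hull B` is linearly independent if and only if there is a vector `h`
with `⟨h, f⟩ > 0` on `A ∪ B` and a vector `h̄` with `⟨h̄, f⟩ > 0` on `A` and `⟨h̄, f⟩ < 0`
on `B`. -/
theorem hull_independence_iff_halfspace_separation_2d
    (A B : Set (EuclideanSpace ℝ (Fin 2)))
    (hAfin : A.Finite) (hBfin : B.Finite) (hAne : A.Nonempty) (hBne : B.Nonempty) :
    (∀ u ∈ convexHull ℝ A, ∀ v ∈ convexHull ℝ B, LinearIndependent ℝ ![u, v]) ↔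
      ((∃ h : EuclideanSpace ℝ (Fin 2), ∀ f ∈ A ∪ B, 0 < ⟪h, f⟫) ∧
       (∃ hbar : EuclideanSpace ℝ (Fin 2),
          (∀ f ∈ A, 0 < ⟪hbar, f⟫) ∧ (∀ f ∈ B, ⟪hbar, f⟫ < 0))) := by
  constructor
  · intro hind
    refine ⟨exists_forall_inner_pos_of_zero_notMem_convexHull (hAfin.union hBfin)
      (zero_notMem_convexHull_union_of_linearIndependent hAne hBne hind), ?_⟩
    obtain ⟨hbar, hpos⟩ := exists_forall_inner_pos_of_zero_notMem_convexHull
      (hAfin.union hBfin.neg) (zero_notMem_convexHull_union_neg_of_linearIndependent hAne hBne hind)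
    refine ⟨hbar, fun f hf ↦ hpos f (.inl hf), fun f hf ↦ ?_⟩
    simpa [inner_neg_right] using hpos (-f) (.inr (by simpa using hf))
  · rintro ⟨⟨h, hpos⟩, hbar, hbarA, hbarB⟩ u hu v hv
    have hu₁ := inner_pos_of_mem_convexHull (fun f hf ↦ hpos f (.inl hf)) hu
    have hv₁ := inner_pos_of_mem_convexHull (fun f hf ↦ hpos f (.inr hf)) hv
    have hu₂ := inner_pos_of_mem_convexHull hbarA hu
    have hv₂ := inner_pos_of_mem_convexHull (h := -hbar) (by simpa [inner_neg_left]) hv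
    rw [inner_neg_left, neg_pos] at hv₂
    refine linearIndependent_pair_of_inner_det_ne_zero (h := h) (k := hbar) (ne_of_lt ?_)
    nlinarith [mul_pos hv₁ hu₂, mul_neg_of_pos_of_neg hu₁ hv₂]
end

section
/- Let A, B, and C be nonempty finite sets of vectors in ℝ³. Then the following are equivalent: (I) for every u in the convex hull of A, every v in the convex hull of B, and every w in the convex hull of C, the 3×3 matrix with columns u, v, w is invertible (equivalently, u, v, w are linearly independent); (II) there exist vectors h₁, h₂, h₃, h₄ ∈ ℝ³ such that: ⟨h₁, f⟩ > 0 for all f ∈ A ∪ B ∪ C; ⟨h₂, f⟩ > 0 for all f ∈ A ∪ B and ⟨h₂, f⟩ < 0 for all f ∈ C; ⟨h₃, f⟩ > 0 for all f ∈ A ∪ C and ⟨h₃, f⟩ < 0 for all f ∈ B; and ⟨h₄, f⟩ > 0 for all f ∈ A and ⟨h₄, f⟩ < 0 for all f ∈ B ∪ C. -/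
/-!
Treat `A, B, C` as a finite family `A : ι → Set E`. If every choice of points `x i ∈ conv (A i)`
is linearly independent, then for every sign pattern `ε : ι → {±1}` the origin is not in the
convex hull of the finite set `⋃ i, ε i • A i`: a convex combination of it vanishing would be a
nontrivial linear relation between points of the hulls `conv (ε i • A i) = ε i • conv (A i)`.
Hahn–Banach then gives a vector `h` strictly positive on that set. Conversely, if
`∑ i, g i • x i = 0`, pairing with a vector realising the sign pattern of `g` makes every term
`g i * ⟪h, x i⟫` nonnegative, and positive unless `g i = 0`. Sign patterns come in opposite pairs
`h`, `-h`, so it suffices to realise the four that are positive on `A`.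
-/

open scoped RealInnerProductSpace Pointwise
open Set

def HullsLinearIndependent {E ι : Type*} (𝕜 : Type*) [Semiring 𝕜] [PartialOrder 𝕜]
    [AddCommMonoid E] [Module 𝕜 E] (A : ι → Set E) : Prop :=
  ∀ x : ι → E, (∀ i, x i ∈ convexHull 𝕜 (A i)) → LinearIndependent 𝕜 x

section OrderedField

variable {𝕜 E ι : Type*} [Field 𝕜] [LinearOrder 𝕜] [AddCommGroup E] [Module 𝕜 E]

theorem hullsLinearIndependent_fin_three_iff {A B C : Set E} :
    HullsLinearIndependent 𝕜 ![A, B, C] ↔ ∀ u ∈ convexHull 𝕜 A, ∀ v ∈ convexHull 𝕜 B,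
      ∀ w ∈ convexHull 𝕜 C, LinearIndependent 𝕜 ![u, v, w] := by
  refine ⟨fun h u hu v hv w hw => h _ (Fin.forall_fin_succ.2 ⟨hu, Fin.forall_fin_two.2 ⟨hv, hw⟩⟩),
    fun h x hx => ?_⟩
  convert h _ (hx 0) _ (hx 1) _ (hx 2)
  ext i
  fin_cases i <;> rfl

theorem HullsLinearIndependent.smul {A : ι → Set E} (h : HullsLinearIndependent 𝕜 A)
    {ε : ι → 𝕜} (hε : ∀ i, ε i ≠ 0) : HullsLinearIndependent 𝕜 fun i => ε i • A i := by
  intro x hx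
  simp only [convexHull_smul, mem_smul_set] at hx
  choose y hy hxy using hx
  convert (h y hy).units_smul fun i => Units.mk0 (ε i) (hε i) using 1
  ext i
  simp [← hxy]

variable [IsStrictOrderedRing 𝕜]

theorem convexHull_iUnion_subset [Fintype ι] [DecidableEq ι] {A : ι → Set E}
    (hA : ∀ i, (A i).Nonempty) :
    convexHull 𝕜 (⋃ i, A i) ⊆ {x | ∃ t ∈ stdSimplex 𝕜 ι, ∃ y : ι → E,
      (∀ i, y i ∈ convexHull 𝕜 (A i)) ∧ ∑ i, t i • y i = x} := by
  refine convexHull_min (iUnion_subset fun j f hf => ?_) ?_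
  · choose a ha using hA
    refine ⟨Pi.single j 1, single_mem_stdSimplex 𝕜 j, Function.update a j f, fun i => ?_, ?_⟩
    · rcases eq_or_ne i j with rfl | hij
      · simpa using subset_convexHull 𝕜 _ hf
      · simpa [hij] using subset_convexHull 𝕜 _ (ha i)
    · simp [Pi.single_apply]
  · rintro _ ⟨t, ht, y, hy, rfl⟩ _ ⟨t', ht', y', hy', rfl⟩ a b ha hb hab
    choose z hz hz' using fun i => (convex_convexHull 𝕜 (A i)).exists_mem_add_smul_eq (hy i)
      (hy' i) (mul_nonneg ha (ht.1 i)) (mul_nonneg hb (ht'.1 i))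
    refine ⟨a • t + b • t', convex_stdSimplex 𝕜 ι ht ht' ha hb hab, z, hz, ?_⟩
    simp [hz', Finset.smul_sum, Finset.sum_add_distrib, mul_smul]

theorem HullsLinearIndependent.zero_notMem_convexHull_iUnion [Fintype ι] {A : ι → Set E}
    (h : HullsLinearIndependent 𝕜 A) (hA : ∀ i, (A i).Nonempty) :
    (0 : E) ∉ convexHull 𝕜 (⋃ i, A i) := by
  classical
  intro h0
  obtain ⟨t, ht, y, hy, hsum⟩ := convexHull_iUnion_subset hA h0
  have ht0 := Fintype.linearIndependent_iff.1 (h y hy) t hsum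
  simpa [ht0] using ht.2

theorem linearIndependent_of_forall_exists_pos_neg (v : ι → E)
    (h : ∀ s : Set ι, ∃ φ : E →ₗ[𝕜] 𝕜, ∀ i, (i ∈ s → 0 < φ (v i)) ∧ (i ∉ s → φ (v i) < 0)) :
    LinearIndependent 𝕜 v := by
  rw [linearIndependent_iff']
  intro s g hg
  obtain ⟨φ, hφ⟩ := h {i | 0 ≤ g i}
  have hterm : ∀ i, 0 ≤ g i * φ (v i) ∧ φ (v i) ≠ 0 := by
    intro i
    by_cases hi : 0 ≤ g i
    · have hpos := (hφ i).1 hi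
      exact ⟨mul_nonneg hi hpos.le, hpos.ne'⟩
    · have hneg := (hφ i).2 hi
      exact ⟨mul_nonneg_of_nonpos_of_nonpos (not_le.1 hi).le hneg.le, hneg.ne⟩
  have hsum : ∑ i ∈ s, g i * φ (v i) = 0 := by simpa using congrArg φ hg
  intro i hi
  have hgi := (Finset.sum_eq_zero_iff_of_nonneg fun i _ => (hterm i).1).1 hsum i hi
  exact (mul_eq_zero.1 hgi).resolve_right (hterm i).2

end OrderedField

section InnerProductSpace

variable {E ι : Type*} [NormedAddCommGroup E] [InnerProductSpace ℝ E]

theorem exists_inner_pos_of_zero_notMem_convexHull [CompleteSpace E] {S : Set E}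
    (hS : S.Finite) (h0 : (0 : E) ∉ convexHull ℝ S) : ∃ h : E, ∀ x ∈ S, 0 < ⟪h, x⟫ := by
  obtain ⟨f, r, hr, hf⟩ := geometric_hahn_banach_point_closed (convex_convexHull ℝ S)
    (hS.isCompact_convexHull ℝ).isClosed h0
  refine ⟨(InnerProductSpace.toDual ℝ E).symm f, fun x hx => ?_⟩
  rw [InnerProductSpace.toDual_symm_apply]
  exact (map_zero f ▸ hr).trans (hf x (subset_convexHull ℝ S hx))

def IsSignSeparator (A : ι → Set E) (s : Set ι) (h : E) : Prop :=
  ∀ i, ∀ f ∈ A i, (i ∈ s → 0 < ⟪h, f⟫) ∧ (i ∉ s → ⟪h, f⟫ < 0)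

theorem IsSignSeparator.neg_compl {A : ι → Set E} {s : Set ι} {h : E}
    (hh : IsSignSeparator A s h) : IsSignSeparator A sᶜ (-h) := by
  intro i f hf
  simp only [mem_compl_iff, not_not, inner_neg_left, neg_pos, neg_lt_zero]
  exact (hh i f hf).symm

theorem forall_exists_isSignSeparator_iff {A : ι → Set E} (i₀ : ι) :
    (∀ s, ∃ h, IsSignSeparator A s h) ↔ ∀ s, i₀ ∈ s → ∃ h, IsSignSeparator A s h := by
  refine ⟨fun H s _ => H s, fun H s => ?_⟩
  by_cases hs : i₀ ∈ s
  · exact H s hs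
  · obtain ⟨h, hh⟩ := H sᶜ hs
    exact ⟨-h, compl_compl s ▸ hh.neg_compl⟩

theorem hullsLinearIndependent_iff_forall_exists_isSignSeparator [Fintype ι] [CompleteSpace E]
    {A : ι → Set E} (hfin : ∀ i, (A i).Finite) (hne : ∀ i, (A i).Nonempty) :
    HullsLinearIndependent ℝ A ↔ ∀ s, ∃ h, IsSignSeparator A s h := by
  classical
  constructor
  · intro H s
    set ε : ι → ℝ := fun i => if i ∈ s then 1 else -1
    have hε : ∀ i, ε i ≠ 0 := fun i => by by_cases hi : i ∈ s <;> simp [ε, hi]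
    obtain ⟨h, hh⟩ := exists_inner_pos_of_zero_notMem_convexHull
      (finite_iUnion fun i => (hfin i).smul_set)
      ((H.smul hε).zero_notMem_convexHull_iUnion fun i => (hne i).smul_set)
    refine ⟨h, fun i f hf => ?_⟩
    have hεf := hh _ (mem_iUnion_of_mem i (smul_mem_smul_set hf))
    rw [real_inner_smul_right] at hεf
    by_cases hi : i ∈ s <;> simp [ε, hi] at hεf ⊢ <;> linarith
  · intro H x hx
    refine linearIndependent_of_forall_exists_pos_neg x fun s => ?_
    obtain ⟨h, hh⟩ := H s
    refine ⟨innerₗ E h, fun i => ⟨fun hi => ?_, fun hi => ?_⟩⟩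
    · exact convexHull_min (fun f hf => (hh i f hf).1 hi)
        (convex_halfSpace_gt (innerₗ E h).isLinear 0) (hx i)
    · exact convexHull_min (fun f hf => (hh i f hf).2 hi)
        (convex_halfSpace_lt (innerₗ E h).isLinear 0) (hx i)

end InnerProductSpace

theorem forall_set_fin_three_of_zero_mem {P : Set (Fin 3) → Prop} :
    (∀ s, 0 ∈ s → P s) ↔ P univ ∧ P {0, 1} ∧ P {0, 2} ∧ P {0} := by
  refine ⟨fun H => ⟨H _ (mem_univ 0), H _ (by simp), H _ (by simp), H _ rfl⟩, ?_⟩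
  rintro ⟨h₁, h₂, h₃, h₄⟩ s hs
  by_cases h1 : (1 : Fin 3) ∈ s <;> by_cases h2 : (2 : Fin 3) ∈ s
  · convert h₁ using 1; ext i; fin_cases i <;> simp [*]
  · convert h₂ using 1; ext i; fin_cases i <;> simp [*]
  · convert h₃ using 1; ext i; fin_cases i <;> simp [*]
  · convert h₄ using 1; ext i; fin_cases i <;> simp [*]

/-- For nonempty finite sets `A, B, C ⊆ ℝ³`, every triple `(u, v, w)` with
`u ∈ hull A`, `v ∈ hull B`, `w ∈ hull C` is linearly independent (i.e. the matrix
`[u, v, w]` is invertible) if and only if the four half-space separation conditions with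
vectors `h₁, h₂, h₃, h₄` hold. -/
theorem hull_independence_iff_halfspace_separation_3d
    (A B C : Set (EuclideanSpace ℝ (Fin 3)))
    (hAfin : A.Finite) (hBfin : B.Finite) (hCfin : C.Finite)
    (hAne : A.Nonempty) (hBne : B.Nonempty) (hCne : C.Nonempty) :
    (∀ u ∈ convexHull ℝ A, ∀ v ∈ convexHull ℝ B, ∀ w ∈ convexHull ℝ C,
        LinearIndependent ℝ ![u, v, w]) ↔
      ((∃ h₁ : EuclideanSpace ℝ (Fin 3), ∀ f ∈ A ∪ B ∪ C, 0 < ⟪h₁, f⟫) ∧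
       (∃ h₂ : EuclideanSpace ℝ (Fin 3),
          (∀ f ∈ A ∪ B, 0 < ⟪h₂, f⟫) ∧ (∀ f ∈ C, ⟪h₂, f⟫ < 0)) ∧
       (∃ h₃ : EuclideanSpace ℝ (Fin 3),
          (∀ f ∈ A ∪ C, 0 < ⟪h₃, f⟫) ∧ (∀ f ∈ B, ⟪h₃, f⟫ < 0)) ∧
       (∃ h₄ : EuclideanSpace ℝ (Fin 3),
          (∀ f ∈ A, 0 < ⟪h₄, f⟫) ∧ (∀ f ∈ B ∪ C, ⟪h₄, f⟫ < 0))) := by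
  have hfin : ∀ i, (![A, B, C] i).Finite := by simp [Fin.forall_fin_succ, hAfin, hBfin, hCfin]
  have hne : ∀ i, (![A, B, C] i).Nonempty := by simp [Fin.forall_fin_succ, hAne, hBne, hCne]
  rw [← hullsLinearIndependent_fin_three_iff,
    hullsLinearIndependent_iff_forall_exists_isSignSeparator hfin hne,
    forall_exists_isSignSeparator_iff 0, forall_set_fin_three_of_zero_mem]
  simp [IsSignSeparator, Fin.forall_fin_succ, or_imp, forall_and, and_assoc]
end

section
/- Let U ⊆ ℝ² be a convex set and let F : ℝ² → ℝ² be continuously differentiable on U. Suppose there exists h ∈ ℝ² such that for every x ∈ U, ⟨h, ∂F/∂ξ(x)⟩ > 0 and ⟨h, ∂F/∂η(x)⟩ > 0, and there exists h̄ ∈ ℝ² such that for every x ∈ U, ⟨h̄, ∂F/∂ξ(x)⟩ > 0 and ⟨h̄, ∂F/∂η(x)⟩ < 0. Then F is injective on U. -/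
/-! Given `u ≠ v` in `U`, the quadrant of `d = v - u` selects one functional `ℓ` among
`±⟪h, ·⟫, ±⟪hbar, ·⟫` that is positive on `DF(x) d` for every `x ∈ U`. The mean value theorem
for `ℓ ∘ F` on the segment `[u, v]` then gives `ℓ (F u) < ℓ (F v)`. -/

open scoped RealInnerProductSpace

section MeanValue

variable {E G : Type*} [NormedAddCommGroup E] [NormedSpace ℝ E]
  [NormedAddCommGroup G] [NormedSpace ℝ G]

theorem lt_of_forall_pos_fderiv_segment {F : E → G} (ℓ : G →L[ℝ] ℝ) {u v : E}
    (hF : ∀ x ∈ segment ℝ u v, DifferentiableAt ℝ F x)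
    (hpos : ∀ x ∈ segment ℝ u v, 0 < ℓ (fderiv ℝ F x (v - u))) :
    ℓ (F u) < ℓ (F v) := by
  obtain ⟨z, hz, hmvt⟩ := domain_mvt (f := fun x => ℓ (F x))
    (f' := fun x => ℓ.comp (fderiv ℝ F x))
    (fun x hx => (ℓ.hasFDerivAt.comp x (hF x hx).hasFDerivAt).hasFDerivWithinAt)
    (convex_segment u v) (left_mem_segment ℝ u v) (right_mem_segment ℝ u v)
  have hdiff : 0 < ℓ (F v) - ℓ (F u) := hmvt ▸ hpos z hz
  linarith

theorem Convex.injOn_of_forall_exists_pos_fderiv {U : Set E} (hU : Convex ℝ U) {F : E → G}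
    (hF : ∀ x ∈ U, DifferentiableAt ℝ F x)
    (hdir : ∀ d : E, d ≠ 0 → ∃ ℓ : G →L[ℝ] ℝ, ∀ x ∈ U, 0 < ℓ (fderiv ℝ F x d)) :
    Set.InjOn F U := by
  intro u hu v hv huv
  by_contra hne
  obtain ⟨ℓ, hℓ⟩ := hdir (v - u) (sub_ne_zero.2 (Ne.symm hne))
  have hlt := lt_of_forall_pos_fderiv_segment ℓ
    (fun x hx => hF x (hU.segment_subset hu hv hx))
    (fun x hx => hℓ x (hU.segment_subset hu hv hx))
  exact (huv ▸ hlt).false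

end MeanValue

theorem ContinuousLinearMap.apply_eq_fst_smul_add_snd_smul {M : Type*} [AddCommGroup M]
    [Module ℝ M] [TopologicalSpace M] (φ : ℝ × ℝ →L[ℝ] M) (d : ℝ × ℝ) :
    φ d = d.1 • φ (1, 0) + d.2 • φ (0, 1) := by
  conv_lhs => rw [show d = d.1 • ((1 : ℝ), (0 : ℝ)) + d.2 • ((0 : ℝ), (1 : ℝ)) by ext <;> simp]
  rw [map_add, map_smul, map_smul]

theorem mul_add_mul_pos_of_nonneg {s t a b : ℝ} (hs : 0 ≤ s) (ht : 0 ≤ t)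
    (hst : s ≠ 0 ∨ t ≠ 0) (ha : 0 < a) (hb : 0 < b) : 0 < s * a + t * b := by
  rcases hst with hs' | ht'
  · nlinarith [mul_pos (lt_of_le_of_ne hs (Ne.symm hs')) ha, mul_nonneg ht hb.le]
  · nlinarith [mul_pos (lt_of_le_of_ne ht (Ne.symm ht')) hb, mul_nonneg hs ha.le]

theorem exists_forall_pos_of_column_signs {α G : Type*} [NormedAddCommGroup G]
    [NormedSpace ℝ G] {s : Set α} {J : α → ℝ × ℝ →L[ℝ] G} (ℓ₁ ℓ₂ : G →L[ℝ] ℝ)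
    (h₁ : ∀ x ∈ s, 0 < ℓ₁ (J x (1, 0)) ∧ 0 < ℓ₁ (J x (0, 1)))
    (h₂ : ∀ x ∈ s, 0 < ℓ₂ (J x (1, 0)) ∧ ℓ₂ (J x (0, 1)) < 0)
    {d : ℝ × ℝ} (hd : d ≠ 0) :
    ∃ ℓ : G →L[ℝ] ℝ, ∀ x ∈ s, 0 < ℓ (J x d) := by
  have hsplit : ∀ (ℓ : G →L[ℝ] ℝ) x,
      ℓ (J x d) = d.1 * ℓ (J x (1, 0)) + d.2 * ℓ (J x (0, 1)) := fun ℓ x => by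
    simpa using (ℓ.comp (J x)).apply_eq_fst_smul_add_snd_smul d
  have hd' : d.1 ≠ 0 ∨ d.2 ≠ 0 := by
    contrapose! hd
    exact Prod.ext hd.1 hd.2
  rcases le_total 0 d.1 with hd1 | hd1 <;> rcases le_total 0 d.2 with hd2 | hd2
  · refine ⟨ℓ₁, fun x hx => ?_⟩
    have := mul_add_mul_pos_of_nonneg hd1 hd2 hd' (h₁ x hx).1 (h₁ x hx).2
    rwa [hsplit]
  · refine ⟨ℓ₂, fun x hx => ?_⟩
    have := mul_add_mul_pos_of_nonneg hd1 (neg_nonneg.2 hd2) (hd'.imp_right neg_ne_zero.2)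
      (h₂ x hx).1 (neg_pos.2 (h₂ x hx).2)
    rw [hsplit]
    linarith
  · refine ⟨-ℓ₂, fun x hx => ?_⟩
    have := mul_add_mul_pos_of_nonneg (neg_nonneg.2 hd1) hd2 (hd'.imp_left neg_ne_zero.2)
      (h₂ x hx).1 (neg_pos.2 (h₂ x hx).2)
    rw [neg_apply, hsplit]
    linarith
  · refine ⟨-ℓ₁, fun x hx => ?_⟩
    have := mul_add_mul_pos_of_nonneg (neg_nonneg.2 hd1) (neg_nonneg.2 hd2)
      (hd'.imp neg_ne_zero.2 neg_ne_zero.2) (h₁ x hx).1 (h₁ x hx).2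
    rw [neg_apply, hsplit]
    linarith

theorem injective_of_halfspace_jacobian_2d_general
    (U : Set (ℝ × ℝ)) (hU : Convex ℝ U)
    (F : ℝ × ℝ → EuclideanSpace ℝ (Fin 2))
    (h : EuclideanSpace ℝ (Fin 2))
    (hh : ∀ x ∈ U, 0 < ⟪h, fderiv ℝ F x (1, 0)⟫ ∧ 0 < ⟪h, fderiv ℝ F x (0, 1)⟫)
    (hbar : EuclideanSpace ℝ (Fin 2))
    (hhbar : ∀ x ∈ U, 0 < ⟪hbar, fderiv ℝ F x (1, 0)⟫ ∧ ⟪hbar, fderiv ℝ F x (0, 1)⟫ < 0) :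
    Set.InjOn F U := by
  have hF : ∀ x ∈ U, DifferentiableAt ℝ F x := fun x hx => by
    -- otherwise `fderiv ℝ F x = 0`, contradicting `hh`
    by_contra hnd
    simpa [fderiv_zero_of_not_differentiableAt hnd] using (hh x hx).1
  exact hU.injOn_of_forall_exists_pos_fderiv hF fun d hd =>
    exists_forall_pos_of_column_signs (innerSL ℝ h) (innerSL ℝ hbar) hh hhbar hd

/-- If `F : ℝ² → ℝ²` is `C¹` on a convex set `U` and there are vectors
`h, h̄` such that at every point of `U` both columns of the Jacobian have positive inner
product with `h`, and the first column has positive and the second negative inner product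
with `h̄`, then `F` is injective on `U`. -/
theorem injective_of_halfspace_jacobian_2d
    (U : Set (ℝ × ℝ)) (hU : Convex ℝ U)
    (F : ℝ × ℝ → EuclideanSpace ℝ (Fin 2)) (hF : ContDiffOn ℝ 1 F U)
    (h : EuclideanSpace ℝ (Fin 2))
    (hh : ∀ x ∈ U, 0 < ⟪h, fderiv ℝ F x (1, 0)⟫ ∧ 0 < ⟪h, fderiv ℝ F x (0, 1)⟫)
    (hbar : EuclideanSpace ℝ (Fin 2))
    (hhbar : ∀ x ∈ U, 0 < ⟪hbar, fderiv ℝ F x (1, 0)⟫ ∧ ⟪hbar, fderiv ℝ F x (0, 1)⟫ < 0) :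
    Set.InjOn F U :=
  injective_of_halfspace_jacobian_2d_general U hU F h hh hbar hhbar
end

section
/- Let U ⊆ ℝ³ be a convex set and let F : ℝ³ → ℝ³ be continuously differentiable on U. Write F_ξ, F_η, F_ζ for the three partial derivatives (columns of the Jacobian) of F. Suppose there exist vectors h₁, h₂, h₃, h₄ ∈ ℝ³ such that for every x ∈ U: ⟨h₁, F_ξ(x)⟩ > 0, ⟨h₁, F_η(x)⟩ > 0, ⟨h₁, F_ζ(x)⟩ > 0; ⟨h₂, F_ξ(x)⟩ > 0, ⟨h₂, F_η(x)⟩ > 0, ⟨h₂, F_ζ(x)⟩ < 0; ⟨h₃, F_ξ(x)⟩ > 0, ⟨h₃, F_η(x)⟩ < 0, ⟨h₃, F_ζ(x)⟩ > 0; and ⟨h₄, F_ξ(x)⟩ > 0, ⟨h₄, F_η(x)⟩ < 0, ⟨h₄, F_ζ(x)⟩ < 0. Then F is injective on U. -/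
/-!
Along the segment from `u` to `v`, the real function `t ↦ ⟪h, F (u + t • (v - u))⟫` has
derivative `⟪h, DF (v - u)⟫`, so if this is positive on `U` then `F u ≠ F v`. After swapping
`u` and `v` the direction `d = v - u` has `d.1 ≥ 0`, and then the `hᵢ` whose sign pattern matches
the signs of `(d.1, d.2.1, d.2.2)` makes every term of
`⟪hᵢ, DF d⟫ = d.1 ⟪hᵢ, F_ξ⟫ + d.2.1 ⟪hᵢ, F_η⟫ + d.2.2 ⟪hᵢ, F_ζ⟫` nonnegative and one of them
positive.
-/

open scoped RealInnerProductSpace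

section MeanValue

variable {E G : Type*} [NormedAddCommGroup E] [NormedSpace ℝ E]
  [NormedAddCommGroup G] [InnerProductSpace ℝ G]

theorem Convex.ne_of_forall_inner_fderiv_pos {U : Set E} (hU : Convex ℝ U) {F : E → G}
    {h : G} {u v : E} (hu : u ∈ U) (hv : v ∈ U)
    (hpos : ∀ x ∈ U, 0 < ⟪h, fderiv ℝ F x (v - u)⟫) : F u ≠ F v := by
  intro hFuv
  let γ : ℝ → E := fun t => u + t • (v - u)
  have hγU : ∀ t ∈ Set.Icc (0 : ℝ) 1, γ t ∈ U := fun t ht => hU.add_smul_sub_mem hu hv ht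
  have hderiv : ∀ t ∈ Set.Icc (0 : ℝ) 1,
      HasDerivAt (fun s => ⟪h, F (γ s)⟫) ⟪h, fderiv ℝ F (γ t) (v - u)⟫ t := by
    intro t ht
    -- `fderiv` is junk (zero) where `F` is not differentiable, which `hpos` rules out.
    have hF : DifferentiableAt ℝ F (γ t) := by
      by_contra hnd
      simpa [fderiv_zero_of_not_differentiableAt hnd] using hpos _ (hγU t ht)
    have hγ : HasDerivAt γ (v - u) t := by
      simpa only [one_smul] using ((hasDerivAt_id' t).smul_const (v - u)).const_add u
    exact (innerSL ℝ h).hasFDerivAt.comp_hasDerivAt t (hF.hasFDerivAt.comp_hasDerivAt t hγ)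
  obtain ⟨c, hc, hslope⟩ := exists_hasDerivAt_eq_slope _ _ zero_lt_one
    (fun t ht => (hderiv t ht).continuousAt.continuousWithinAt)
    (fun t ht => hderiv t (Set.Ioo_subset_Icc_self ht))
  have hγ01 : γ 1 = v ∧ γ 0 = u := by simp [γ]
  rw [hγ01.1, hγ01.2, hFuv, sub_self, zero_div] at hslope
  exact (hpos _ (hγU c (Set.Ioo_subset_Icc_self hc))).ne' hslope

end MeanValue

section SignPatterns

variable {G : Type*} [NormedAddCommGroup G] [InnerProductSpace ℝ G]

theorem inner_apply_eq_coord_sum (L : ℝ × ℝ × ℝ →L[ℝ] G) (h : G) (d : ℝ × ℝ × ℝ) :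
    ⟪h, L d⟫ = d.1 * ⟪h, L (1, 0, 0)⟫ + d.2.1 * ⟪h, L (0, 1, 0)⟫
      + d.2.2 * ⟪h, L (0, 0, 1)⟫ := by
  have hd : d = d.1 • ((1 : ℝ), (0 : ℝ), (0 : ℝ)) + d.2.1 • ((0 : ℝ), (1 : ℝ), (0 : ℝ))
      + d.2.2 • ((0 : ℝ), (0 : ℝ), (1 : ℝ)) := by
    ext <;> simp
  conv_lhs => rw [hd]
  simp only [map_add, map_smul, inner_add_right, real_inner_smul_right]

theorem add_add_pos_of_mul_nonneg {a b c p q r : ℝ} (hp : p ≠ 0) (hq : q ≠ 0) (hr : r ≠ 0)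
    (hap : 0 ≤ a * p) (hbq : 0 ≤ b * q) (hcr : 0 ≤ c * r) (habc : (a, b, c) ≠ 0) :
    0 < a * p + b * q + c * r := by
  refine lt_of_le_of_ne (by positivity) fun hsum => habc ?_
  have ha : a = 0 := (mul_eq_zero.1 (by linarith)).resolve_right hp
  have hb : b = 0 := (mul_eq_zero.1 (by linarith)).resolve_right hq
  have hc : c = 0 := (mul_eq_zero.1 (by linarith)).resolve_right hr
  rw [ha, hb, hc]
  rfl

theorem inner_apply_pos_of_mul_nonneg {L : ℝ × ℝ × ℝ →L[ℝ] G} {h : G} {d : ℝ × ℝ × ℝ}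
    (hd : d ≠ 0) (h₁ : 0 ≤ d.1 * ⟪h, L (1, 0, 0)⟫ ∧ ⟪h, L (1, 0, 0)⟫ ≠ 0)
    (h₂ : 0 ≤ d.2.1 * ⟪h, L (0, 1, 0)⟫ ∧ ⟪h, L (0, 1, 0)⟫ ≠ 0)
    (h₃ : 0 ≤ d.2.2 * ⟪h, L (0, 0, 1)⟫ ∧ ⟪h, L (0, 0, 1)⟫ ≠ 0) : 0 < ⟪h, L d⟫ := by
  rw [inner_apply_eq_coord_sum]
  exact add_add_pos_of_mul_nonneg h₁.2 h₂.2 h₃.2 h₁.1 h₂.1 h₃.1 hd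

theorem exists_forall_inner_apply_pos {α : Type*} {s : Set α} {L : α → ℝ × ℝ × ℝ →L[ℝ] G}
    {h₁ h₂ h₃ h₄ : G}
    (hh₁ : ∀ x ∈ s, 0 < ⟪h₁, L x (1, 0, 0)⟫ ∧
      0 < ⟪h₁, L x (0, 1, 0)⟫ ∧ 0 < ⟪h₁, L x (0, 0, 1)⟫)
    (hh₂ : ∀ x ∈ s, 0 < ⟪h₂, L x (1, 0, 0)⟫ ∧
      0 < ⟪h₂, L x (0, 1, 0)⟫ ∧ ⟪h₂, L x (0, 0, 1)⟫ < 0)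
    (hh₃ : ∀ x ∈ s, 0 < ⟪h₃, L x (1, 0, 0)⟫ ∧
      ⟪h₃, L x (0, 1, 0)⟫ < 0 ∧ 0 < ⟪h₃, L x (0, 0, 1)⟫)
    (hh₄ : ∀ x ∈ s, 0 < ⟪h₄, L x (1, 0, 0)⟫ ∧
      ⟪h₄, L x (0, 1, 0)⟫ < 0 ∧ ⟪h₄, L x (0, 0, 1)⟫ < 0)
    {d : ℝ × ℝ × ℝ} (hd : d ≠ 0) (hd₁ : 0 ≤ d.1) :
    ∃ h, ∀ x ∈ s, 0 < ⟪h, L x d⟫ := by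
  rcases le_or_gt 0 d.2.1 with hd₂ | hd₂ <;> rcases le_or_gt 0 d.2.2 with hd₃ | hd₃
  · refine ⟨h₁, fun x hx => ?_⟩
    obtain ⟨p, q, r⟩ := hh₁ x hx
    exact inner_apply_pos_of_mul_nonneg hd ⟨mul_nonneg hd₁ p.le, p.ne'⟩
      ⟨mul_nonneg hd₂ q.le, q.ne'⟩ ⟨mul_nonneg hd₃ r.le, r.ne'⟩
  · refine ⟨h₂, fun x hx => ?_⟩
    obtain ⟨p, q, r⟩ := hh₂ x hx
    exact inner_apply_pos_of_mul_nonneg hd ⟨mul_nonneg hd₁ p.le, p.ne'⟩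
      ⟨mul_nonneg hd₂ q.le, q.ne'⟩ ⟨mul_nonneg_of_nonpos_of_nonpos hd₃.le r.le, r.ne⟩
  · refine ⟨h₃, fun x hx => ?_⟩
    obtain ⟨p, q, r⟩ := hh₃ x hx
    exact inner_apply_pos_of_mul_nonneg hd ⟨mul_nonneg hd₁ p.le, p.ne'⟩
      ⟨mul_nonneg_of_nonpos_of_nonpos hd₂.le q.le, q.ne⟩ ⟨mul_nonneg hd₃ r.le, r.ne'⟩
  · refine ⟨h₄, fun x hx => ?_⟩
    obtain ⟨p, q, r⟩ := hh₄ x hx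
    exact inner_apply_pos_of_mul_nonneg hd ⟨mul_nonneg hd₁ p.le, p.ne'⟩
      ⟨mul_nonneg_of_nonpos_of_nonpos hd₂.le q.le, q.ne⟩
      ⟨mul_nonneg_of_nonpos_of_nonpos hd₃.le r.le, r.ne⟩

end SignPatterns

theorem injective_of_halfspace_jacobian_3d_general
    (U : Set (ℝ × ℝ × ℝ)) (hU : Convex ℝ U)
    (F : ℝ × ℝ × ℝ → EuclideanSpace ℝ (Fin 3))
    (h₁ h₂ h₃ h₄ : EuclideanSpace ℝ (Fin 3))
    (hh₁ : ∀ x ∈ U, 0 < ⟪h₁, fderiv ℝ F x (1, 0, 0)⟫ ∧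
      0 < ⟪h₁, fderiv ℝ F x (0, 1, 0)⟫ ∧ 0 < ⟪h₁, fderiv ℝ F x (0, 0, 1)⟫)
    (hh₂ : ∀ x ∈ U, 0 < ⟪h₂, fderiv ℝ F x (1, 0, 0)⟫ ∧
      0 < ⟪h₂, fderiv ℝ F x (0, 1, 0)⟫ ∧ ⟪h₂, fderiv ℝ F x (0, 0, 1)⟫ < 0)
    (hh₃ : ∀ x ∈ U, 0 < ⟪h₃, fderiv ℝ F x (1, 0, 0)⟫ ∧
      ⟪h₃, fderiv ℝ F x (0, 1, 0)⟫ < 0 ∧ 0 < ⟪h₃, fderiv ℝ F x (0, 0, 1)⟫)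
    (hh₄ : ∀ x ∈ U, 0 < ⟪h₄, fderiv ℝ F x (1, 0, 0)⟫ ∧
      ⟪h₄, fderiv ℝ F x (0, 1, 0)⟫ < 0 ∧ ⟪h₄, fderiv ℝ F x (0, 0, 1)⟫ < 0) :
    Set.InjOn F U := by
  intro u hu v hv hFuv
  by_contra hne
  wlog hd₁ : 0 ≤ (v - u).1 generalizing u v
  · refine this hv hu hFuv.symm (Ne.symm hne) ?_
    simp only [Prod.fst_sub] at hd₁ ⊢
    linarith
  obtain ⟨h, hpos⟩ :=
    exists_forall_inner_apply_pos hh₁ hh₂ hh₃ hh₄ (sub_ne_zero.2 (Ne.symm hne)) hd₁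
  exact hU.ne_of_forall_inner_fderiv_pos hu hv hpos hFuv

/-- If `F : ℝ³ → ℝ³` is `C¹` on a convex set `U` and there are vectors
`h₁, h₂, h₃, h₄` realizing the four sign patterns `(+,+,+), (+,+,−), (+,−,+), (+,−,−)`
against the three columns of the Jacobian at every point of `U`, then `F` is injective
on `U`. -/
theorem injective_of_halfspace_jacobian_3d
    (U : Set (ℝ × ℝ × ℝ)) (hU : Convex ℝ U)
    (F : ℝ × ℝ × ℝ → EuclideanSpace ℝ (Fin 3)) (hF : ContDiffOn ℝ 1 F U)
    (h₁ h₂ h₃ h₄ : EuclideanSpace ℝ (Fin 3))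
    (hh₁ : ∀ x ∈ U, 0 < ⟪h₁, fderiv ℝ F x (1, 0, 0)⟫ ∧
      0 < ⟪h₁, fderiv ℝ F x (0, 1, 0)⟫ ∧ 0 < ⟪h₁, fderiv ℝ F x (0, 0, 1)⟫)
    (hh₂ : ∀ x ∈ U, 0 < ⟪h₂, fderiv ℝ F x (1, 0, 0)⟫ ∧
      0 < ⟪h₂, fderiv ℝ F x (0, 1, 0)⟫ ∧ ⟪h₂, fderiv ℝ F x (0, 0, 1)⟫ < 0)
    (hh₃ : ∀ x ∈ U, 0 < ⟪h₃, fderiv ℝ F x (1, 0, 0)⟫ ∧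
      ⟪h₃, fderiv ℝ F x (0, 1, 0)⟫ < 0 ∧ 0 < ⟪h₃, fderiv ℝ F x (0, 0, 1)⟫)
    (hh₄ : ∀ x ∈ U, 0 < ⟪h₄, fderiv ℝ F x (1, 0, 0)⟫ ∧
      ⟪h₄, fderiv ℝ F x (0, 1, 0)⟫ < 0 ∧ ⟪h₄, fderiv ℝ F x (0, 0, 1)⟫ < 0) :
    Set.InjOn F U :=
  injective_of_halfspace_jacobian_3d_general U hU F h₁ h₂ h₃ h₄ hh₁ hh₂ hh₃ hh₄
end

section
/- Let p ≥ 1 be an integer and let f_{i,j} ∈ ℝ² for integers i, j ≥ 0 with i + j ≤ p. Define F : ℝ² → ℝ² by F(ξ,η) = Σ_{i=0}^{p} Σ_{j=0}^{p−i} f_{i,j} ξ^i η^j (1−ξ−η)^{p−i−j} · p!/(i! j! (p−i−j)!). Let G_ξ = {p(f_{i+1,j} − f_{i,j}) : i, j ≥ 0, i + j ≤ p−1} and G_η = {p(f_{i,j+1} − f_{i,j}) : i, j ≥ 0, i + j ≤ p−1}. Suppose there exists h ∈ ℝ² with ⟨h, g⟩ > 0 for all g ∈ G_ξ ∪ G_η,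 and there exists h̄ ∈ ℝ² with ⟨h̄, g⟩ > 0 for all g ∈ G_ξ and ⟨h̄, g⟩ < 0 for all g ∈ G_η. Then F is injective on the reference triangle Δ² = {(ξ,η) : ξ ≥ 0, η ≥ 0, ξ + η ≤ 1}. -/
/-!
Take `x ≠ y` in the triangle with `d = y - x`. Along the segment from `x` to `y`, the derivative of
`F` is `p` times a degree `p - 1` Bernstein–Bézier form with control points
`d₁ (f_{i+1,j} - f_{i,j}) + d₂ (f_{i,j+1} - f_{i,j})`. Depending on the signs of `d₁, d₂`, one of
`±h`, `±h̄` pairs positively with all of these control points, so `⟪v, F⟫` is strictly increasing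
along the segment (a Bernstein–Bézier form with positive control values is positive on the
triangle), and `F x ≠ F y`.
-/

open Finset
open scoped Nat RealInnerProductSpace

/-- For `d₁ d₂ ≥ 0` the witness is `(d₁ + d₂) • h`, since
`(d₁ + d₂) (d₁ α + d₂ β) = d₁² α + d₁ d₂ (α + β) + d₂² β > 0` for `α, β > 0`; otherwise it is
`d₁ • hbar`, since `d₁ (d₁ α + d₂ β) = d₁² α + d₁ d₂ β > 0` for `α > 0 > β`. -/
lemma exists_forall_inner_combination_pos {E : Type*} [NormedAddCommGroup E]
    [InnerProductSpace ℝ E] {A B : Set E} {h hbar : E} (hh : ∀ g ∈ A ∪ B, 0 < ⟪h, g⟫)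
    (hhbar : (∀ g ∈ A, 0 < ⟪hbar, g⟫) ∧ (∀ g ∈ B, ⟪hbar, g⟫ < 0)) {d₁ d₂ : ℝ}
    (hd : d₁ ≠ 0 ∨ d₂ ≠ 0) :
    ∃ v : E, ∀ a ∈ A, ∀ b ∈ B, 0 < d₁ * ⟪v, a⟫ + d₂ * ⟪v, b⟫ := by
  rcases le_or_gt 0 (d₁ * d₂) with hd₁₂ | hd₁₂
  · refine ⟨(d₁ + d₂) • h, fun a ha b hb => ?_⟩
    have hα := hh a (Or.inl ha)
    have hβ := hh b (Or.inr hb)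
    have hαβ := mul_nonneg hd₁₂ (add_pos hα hβ).le
    simp only [real_inner_smul_left]
    rcases hd with hd | hd
    · nlinarith [mul_pos (sq_pos_of_ne_zero hd) hα, mul_nonneg (sq_nonneg d₂) hβ.le]
    · nlinarith [mul_pos (sq_pos_of_ne_zero hd) hβ, mul_nonneg (sq_nonneg d₁) hα.le]
  · have hd₁ : d₁ ≠ 0 := by
      rintro rfl
      simp at hd₁₂
    refine ⟨d₁ • hbar, fun a ha b hb => ?_⟩
    have hα := hhbar.1 a ha
    have hβ := hhbar.2 b hb
    simp only [real_inner_smul_left]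
    nlinarith [mul_pos (sq_pos_of_ne_zero hd₁) hα, mul_pos_of_neg_of_neg hd₁₂ hβ]

namespace BernsteinBezier

noncomputable def trinomialCoeff (p i j : ℕ) : ℝ :=
  (p ! : ℝ) / ((i ! : ℝ) * (j ! : ℝ) * ((p - i - j)! : ℝ))

lemma trinomialCoeff_pos (p i j : ℕ) : 0 < trinomialCoeff p i j := by
  unfold trinomialCoeff
  positivity

lemma trinomialCoeff_comm (p i j : ℕ) : trinomialCoeff p i j = trinomialCoeff p j i := by
  rw [trinomialCoeff, trinomialCoeff, Nat.sub_right_comm]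
  ring

lemma succ_mul_trinomialCoeff_succ_left (p i j : ℕ) :
    ((i : ℝ) + 1) * trinomialCoeff (p + 1) (i + 1) j = (p + 1) * trinomialCoeff p i j := by
  simp only [trinomialCoeff, Nat.factorial_succ, Nat.add_sub_add_right]
  push_cast
  field_simp

lemma succ_mul_trinomialCoeff_succ_right (p i j : ℕ) :
    ((j : ℝ) + 1) * trinomialCoeff (p + 1) i (j + 1) = (p + 1) * trinomialCoeff p i j := by
  rw [trinomialCoeff_comm, succ_mul_trinomialCoeff_succ_left, trinomialCoeff_comm]

lemma sub_mul_trinomialCoeff {p i j : ℕ} (h : i + j ≤ p) :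
    ((p + 1 - i - j : ℕ) : ℝ) * trinomialCoeff (p + 1) i j = (p + 1) * trinomialCoeff p i j := by
  rw [trinomialCoeff, trinomialCoeff, show p + 1 - i - j = p - i - j + 1 by omega,
    Nat.factorial_succ (p - i - j), Nat.factorial_succ p]
  push_cast
  field_simp

def refTriangle : Set (ℝ × ℝ) := {x | 0 ≤ x.1 ∧ 0 ≤ x.2 ∧ x.1 + x.2 ≤ 1}

lemma convex_refTriangle : Convex ℝ refTriangle := by
  rintro x ⟨hx₁, hx₂, hx⟩ y ⟨hy₁, hy₂, hy⟩ a b ha hb hab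
  refine ⟨?_, ?_, ?_⟩ <;>
    simp only [Prod.fst_add, Prod.snd_add, Prod.smul_fst, Prod.smul_snd, smul_eq_mul] <;>
    nlinarith

noncomputable def bezier {E : Type*} [AddCommMonoid E] [Module ℝ E] (p : ℕ) (f : ℕ → ℕ → E)
    (x : ℝ × ℝ) : E :=
  ∑ i ∈ range (p + 1), ∑ j ∈ range (p - i + 1),
    (x.1 ^ i * x.2 ^ j * (1 - x.1 - x.2) ^ (p - i - j) * trinomialCoeff p i j) • f i j

lemma map_bezier {E E' : Type*} [AddCommMonoid E] [Module ℝ E] [AddCommMonoid E'] [Module ℝ E']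
    (L : E →ₗ[ℝ] E') (p : ℕ) (f : ℕ → ℕ → E) (x : ℝ × ℝ) :
    L (bezier p f x) = bezier p (fun i j => L (f i j)) x := by
  simp only [bezier, map_sum, map_smul]

lemma bezier_pos {p : ℕ} {u : ℕ → ℕ → ℝ} (hu : ∀ i j, i + j ≤ p → 0 < u i j) {x : ℝ × ℝ}
    (hx : x ∈ refTriangle) : 0 < bezier p u x := by
  obtain ⟨hx₁, hx₂, hx⟩ := hx
  have hc : 0 ≤ 1 - x.1 - x.2 := by linarith
  have hterm : ∀ i ∈ range (p + 1), ∀ j ∈ range (p - i + 1),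
      0 ≤ (x.1 ^ i * x.2 ^ j * (1 - x.1 - x.2) ^ (p - i - j) * trinomialCoeff p i j) • u i j := by
    intro i hi j hj
    have := hu i j (by rw [mem_range] at hi hj; omega)
    have := trinomialCoeff_pos p i j
    rw [smul_eq_mul]
    positivity
  -- one of the barycentric coordinates is positive, hence so is the basis polynomial of that vertex
  have hvertex : ∀ i j, i + j ≤ p → 0 < x.1 ^ i * x.2 ^ j * (1 - x.1 - x.2) ^ (p - i - j) →
      0 < bezier p u x := by
    intro i j hij hpos
    refine sum_pos' (fun i hi => sum_nonneg (hterm i hi)) ⟨i, mem_range.2 (by omega), ?_⟩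
    refine sum_pos' (hterm i (mem_range.2 (by omega))) ⟨j, mem_range.2 (by omega), ?_⟩
    have := hu i j hij
    have := trinomialCoeff_pos p i j
    rw [smul_eq_mul]
    positivity
  rcases hx₁.lt_or_eq with h₁ | h₁
  · exact hvertex p 0 (by omega) (by simpa using pow_pos h₁ p)
  rcases hx₂.lt_or_eq with h₂ | h₂
  · exact hvertex 0 p (by omega) (by simpa using pow_pos h₂ p)
  · exact hvertex 0 0 (by omega) (by rw [← h₁, ← h₂]; simp)

section Partials

variable (p : ℕ) (u : ℕ → ℕ → ℝ) (x : ℝ × ℝ)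

/-! The left-hand sides below are the partial derivatives of the homogeneous form
`∑ trinomialCoeff (p + 1) i j a^i b^j c^(p+1-i-j) u i j` in `a`, `b` and `c`, evaluated at the
barycentric coordinates `(x.1, x.2, 1 - x.1 - x.2)`. -/

lemma partial_fst_eq_bezier :
    ∑ i ∈ range (p + 1 + 1), ∑ j ∈ range (p + 1 - i + 1),
      (i : ℝ) * x.1 ^ (i - 1) * x.2 ^ j * (1 - x.1 - x.2) ^ (p + 1 - i - j) *
        trinomialCoeff (p + 1) i j * u i j =
      (p + 1) * bezier p (fun i j => u (i + 1) j) x := by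
  rw [sum_range_succ', bezier, mul_sum]
  simp only [CharP.cast_eq_zero, zero_mul, sum_const_zero, add_zero]
  refine sum_congr rfl fun i _ => ?_
  rw [Nat.add_sub_add_right, mul_sum]
  refine sum_congr rfl fun j _ => ?_
  rw [Nat.add_sub_cancel, smul_eq_mul, Nat.cast_succ]
  linear_combination (x.1 ^ i * x.2 ^ j * (1 - x.1 - x.2) ^ (p - i - j) * u (i + 1) j) *
    succ_mul_trinomialCoeff_succ_left p i j

lemma partial_snd_eq_bezier :
    ∑ i ∈ range (p + 1 + 1), ∑ j ∈ range (p + 1 - i + 1),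
      (j : ℝ) * x.1 ^ i * x.2 ^ (j - 1) * (1 - x.1 - x.2) ^ (p + 1 - i - j) *
        trinomialCoeff (p + 1) i j * u i j =
      (p + 1) * bezier p (fun i j => u i (j + 1)) x := by
  rw [sum_range_succ, Nat.sub_self, zero_add, sum_range_one, bezier, mul_sum]
  simp only [CharP.cast_eq_zero, zero_mul, add_zero]
  refine sum_congr rfl fun i hi => ?_
  rw [mem_range] at hi
  rw [show p + 1 - i + 1 = p - i + 1 + 1 by omega, sum_range_succ', mul_sum]
  simp only [CharP.cast_eq_zero, zero_mul, add_zero]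
  refine sum_congr rfl fun j _ => ?_
  rw [Nat.add_sub_cancel, show p + 1 - i - (j + 1) = p - i - j by omega, smul_eq_mul,
    Nat.cast_succ]
  linear_combination (x.1 ^ i * x.2 ^ j * (1 - x.1 - x.2) ^ (p - i - j) * u i (j + 1)) *
    succ_mul_trinomialCoeff_succ_right p i j

lemma partial_thd_eq_bezier :
    ∑ i ∈ range (p + 1 + 1), ∑ j ∈ range (p + 1 - i + 1),
      ((p + 1 - i - j : ℕ) : ℝ) * x.1 ^ i * x.2 ^ j * (1 - x.1 - x.2) ^ (p + 1 - i - j - 1) *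
        trinomialCoeff (p + 1) i j * u i j =
      (p + 1) * bezier p u x := by
  rw [sum_range_succ, Nat.sub_self, zero_add, sum_range_one, bezier, mul_sum]
  simp only [Nat.zero_sub, CharP.cast_eq_zero, zero_mul, add_zero]
  refine sum_congr rfl fun i hi => ?_
  rw [mem_range] at hi
  rw [show p + 1 - i + 1 = p - i + 1 + 1 by omega, sum_range_succ,
    show p + 1 - i - (p - i + 1) = 0 by omega, mul_sum]
  simp only [CharP.cast_eq_zero, zero_mul, add_zero]
  refine sum_congr rfl fun j hj => ?_
  rw [mem_range] at hj
  rw [show p + 1 - i - j - 1 = p - i - j by omega, smul_eq_mul]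
  linear_combination (x.1 ^ i * x.2 ^ j * (1 - x.1 - x.2) ^ (p - i - j) * u i j) *
    sub_mul_trinomialCoeff (show i + j ≤ p by omega)

end Partials

lemma bezier_forward_diff (p : ℕ) (u : ℕ → ℕ → ℝ) (d x : ℝ × ℝ) :
    bezier p (fun i j => d.1 * (u (i + 1) j - u i j) + d.2 * (u i (j + 1) - u i j)) x =
      d.1 * bezier p (fun i j => u (i + 1) j) x + d.2 * bezier p (fun i j => u i (j + 1)) x +
        (-d.1 - d.2) * bezier p u x := by
  simp only [bezier, smul_eq_mul, mul_sum, ← sum_add_distrib]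
  exact sum_congr rfl fun i _ => sum_congr rfl fun j _ => by ring

lemma hasDerivAt_bezier_add_smul (p : ℕ) (u : ℕ → ℕ → ℝ) (x d : ℝ × ℝ) (t : ℝ) :
    HasDerivAt (fun t => bezier (p + 1) u (x + t • d))
      ((p + 1) * bezier p (fun i j => d.1 * (u (i + 1) j - u i j) + d.2 * (u i (j + 1) - u i j))
        (x + t • d)) t := by
  have ha : HasDerivAt (fun t => (x + t • d).1) d.1 t := by
    simpa using ((hasDerivAt_id t).mul_const d.1).const_add x.1
  have hb : HasDerivAt (fun t => (x + t • d).2) d.2 t := by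
    simpa using ((hasDerivAt_id t).mul_const d.2).const_add x.2
  have hc : HasDerivAt (fun t => 1 - (x + t • d).1 - (x + t • d).2) (-d.1 - d.2) t := by
    simpa using ((hasDerivAt_const t (1 : ℝ)).fun_sub ha).fun_sub hb
  have key := HasDerivAt.fun_sum fun i (_ : i ∈ range (p + 1 + 1)) =>
    HasDerivAt.fun_sum fun j (_ : j ∈ range (p + 1 - i + 1)) =>
      ((((ha.fun_pow i).fun_mul (hb.fun_pow j)).fun_mul (hc.fun_pow (p + 1 - i - j))).mul_const
        (trinomialCoeff (p + 1) i j)).mul_const (u i j)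
  refine key.congr_deriv ?_
  rw [bezier_forward_diff, mul_add, mul_add, mul_left_comm, ← partial_fst_eq_bezier,
    mul_left_comm, ← partial_snd_eq_bezier, mul_left_comm, ← partial_thd_eq_bezier]
  simp only [mul_sum, ← sum_add_distrib]
  exact sum_congr rfl fun i _ => sum_congr rfl fun j _ => by ring

lemma bezier_lt_bezier (p : ℕ) (u : ℕ → ℕ → ℝ) {x y : ℝ × ℝ} (hx : x ∈ refTriangle)
    (hy : y ∈ refTriangle)
    (hu : ∀ i j, i + j ≤ p →
      0 < (y - x).1 * (u (i + 1) j - u i j) + (y - x).2 * (u i (j + 1) - u i j)) :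
    bezier (p + 1) u x < bezier (p + 1) u y := by
  have hderiv := hasDerivAt_bezier_add_smul p u x (y - x)
  obtain ⟨τ, hτ, hslope⟩ := exists_hasDerivAt_eq_slope _ _ zero_lt_one
    (fun t _ => (hderiv t).continuousAt.continuousWithinAt) (fun t _ => hderiv t)
  have hpos := bezier_pos hu
    (convex_refTriangle.add_smul_sub_mem hx hy (Set.Ioo_subset_Icc_self hτ))
  simp only [one_smul, zero_smul, add_zero, add_sub_cancel, sub_zero, div_one] at hslope
  linarith [mul_pos (by positivity : (0 : ℝ) < p + 1) hpos]

end BernsteinBezier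

open BernsteinBezier

/-- For a total-degree-`p` Bernstein–Bézier mapping `F : ℝ² → ℝ²`, if there
is a vector `h` with positive inner product against every vector in `G_ξ ∪ G_η`, and a
vector `h̄` with positive inner product against `G_ξ` and negative against `G_η`, then `F`
is injective on the reference triangle `Δ²`. -/
theorem bernstein_bezier_injective_of_halfspace_condition
    (p : ℕ) (hp : 1 ≤ p) (f : ℕ → ℕ → EuclideanSpace ℝ (Fin 2))
    (F : ℝ × ℝ → EuclideanSpace ℝ (Fin 2))
    (hF : F = fun x => ∑ i ∈ Finset.range (p + 1), ∑ j ∈ Finset.range (p - i + 1),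
      (x.1 ^ i * x.2 ^ j * (1 - x.1 - x.2) ^ (p - i - j) *
        ((Nat.factorial p : ℝ) /
          ((Nat.factorial i : ℝ) * (Nat.factorial j : ℝ) * (Nat.factorial (p - i - j) : ℝ)))) • f i j)
    (Gξ Gη : Set (EuclideanSpace ℝ (Fin 2)))
    (hGξ : Gξ = {g | ∃ i j, i + j ≤ p - 1 ∧ g = (p : ℝ) • (f (i + 1) j - f i j)})
    (hGη : Gη = {g | ∃ i j, i + j ≤ p - 1 ∧ g = (p : ℝ) • (f i (j + 1) - f i j)})
    (h : EuclideanSpace ℝ (Fin 2)) (hh : ∀ g ∈ Gξ ∪ Gη, 0 < ⟪h, g⟫)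
    (hbar : EuclideanSpace ℝ (Fin 2))
    (hhbar : (∀ g ∈ Gξ, 0 < ⟪hbar, g⟫) ∧ (∀ g ∈ Gη, ⟪hbar, g⟫ < 0)) :
    Set.InjOn F {x : ℝ × ℝ | 0 ≤ x.1 ∧ 0 ≤ x.2 ∧ x.1 + x.2 ≤ 1} := by
  obtain ⟨q, rfl⟩ : ∃ q, p = q + 1 := ⟨p - 1, by omega⟩
  have hFb : F = bezier (q + 1) f := hF
  intro x hx y hy hxy
  by_contra hne
  have hd : (y - x).1 ≠ 0 ∨ (y - x).2 ≠ 0 := by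
    by_contra! hd
    exact hne (sub_eq_zero.1 (Prod.ext hd.1 hd.2)).symm
  obtain ⟨v, hv⟩ := exists_forall_inner_combination_pos hh hhbar hd
  have hlt := bezier_lt_bezier q (fun i j => ⟪v, f i j⟫) hx hy fun i j hij => by
    have hξ : ((q + 1 : ℕ) : ℝ) • (f (i + 1) j - f i j) ∈ Gξ := by
      rw [hGξ]; exact ⟨i, j, by omega, rfl⟩
    have hη : ((q + 1 : ℕ) : ℝ) • (f i (j + 1) - f i j) ∈ Gη := by
      rw [hGη]; exact ⟨i, j, by omega, rfl⟩
    have := hv _ hξ _ hη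
    simp only [real_inner_smul_right, inner_sub_right] at this
    nlinarith
  have hinner : ∀ z, ⟪v, F z⟫ = bezier (q + 1) (fun i j => ⟪v, f i j⟫) z := fun z => by
    rw [hFb]
    exact map_bezier (innerₛₗ ℝ v) (q + 1) f z
  rw [← hinner, ← hinner, hxy] at hlt
  exact lt_irrefl _ hlt
end
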